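/- For a probability distribution P on a finite set Z and ε ≥ 0, the infimum of H_α(Q) over Q with statistical distance δ(P,Q) ≤ ε (Q a probability distribution) is at least the infimum of H_α(Q) over non-normalized Q satisfying 0 ≤ Q(z) ≤ P(z) pointwise and ∑_z Q(z) ≥ 1 − ε, for each α ∈ [0,1); i.e., the non-normalized closeness ball gives a smooth Rényi entropy of order α < 1 that is at most the one defined via statistical distance. -/

import Mathlib

/-
Replacing a distribution `Q` in the statistical-distance ball around `P` by the pointwise
minimum `min P Q` gives a non-normalized candidate: it lies below `P`, its mass is
`1 - δ(P, Q) ≥ 1 - ε`, and since `H_α` is monotone in the weights for `α < 1` its entropy is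
at most `H_α(Q)`. The non-normalized entropies are bounded below by `log (1 - ε) / (1 - α)`,
because weights `q ∈ [0, 1]` satisfy `q ≤ q ^ α`; without this bound `sInf` would take the
junk value `0`.
-/

open Real Finset

/-- Rényi entropy of order `α` (with `H_0 = log |supp|`, natural log). -/
noncomputable def renyiEntropy {Z : Type*} [Fintype Z] (α : ℝ) (Q : Z → ℝ) : ℝ :=
  if α = 0 then Real.log ((Finset.univ.filter fun z => 0 < Q z).card)
  else (1 / (1 - α)) * Real.log (∑ z, Q z ^ α)

theorem two_mul_sum_min_eq {ι : Type*} (s : Finset ι) (P Q : ι → ℝ) :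
    2 * ∑ z ∈ s, min (P z) (Q z) =
      ∑ z ∈ s, P z + ∑ z ∈ s, Q z - ∑ z ∈ s, |P z - Q z| := by
  rw [mul_sum, ← sum_add_distrib, ← sum_sub_distrib]
  exact sum_congr rfl fun z _ ↦ by
    linarith [min_add_max (P z) (Q z), max_sub_min_eq_abs' (P z) (Q z)]

section renyiEntropy

variable {Z : Type*} [Fintype Z] {α : ℝ}

theorem renyiEntropy_mono (hα0 : 0 ≤ α) (hα1 : α < 1) {Q' Q : Z → ℝ} (hQ'0 : 0 ≤ Q')
    (hQ'Q : Q' ≤ Q) (hpos : 0 < ∑ z, Q' z) : renyiEntropy α Q' ≤ renyiEntropy α Q := by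
  obtain ⟨z₀, -, hz₀⟩ := (sum_pos_iff_of_nonneg fun z _ ↦ hQ'0 z).1 hpos
  unfold renyiEntropy
  split_ifs with hα
  · have hcard : 0 < #{z | 0 < Q' z} := card_pos.2 ⟨z₀, by simpa using hz₀⟩
    gcongr
    exact hQ'Q _
  · have hsum_rpow : 0 < ∑ z, Q' z ^ α :=
      (rpow_pos_of_pos hz₀ α).trans_le
        (single_le_sum (fun z _ ↦ rpow_nonneg (hQ'0 z) α) (mem_univ z₀))
    have hscale : 0 ≤ 1 / (1 - α) := by rw [one_div_nonneg]; linarith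
    gcongr with z
    · exact hQ'0 z
    · exact hQ'Q z

theorem log_sum_div_le_renyiEntropy (hα1 : α < 1) {Q : Z → ℝ} (hQ0 : 0 ≤ Q) (hQ1 : Q ≤ 1)
    (hpos : 0 < ∑ z, Q z) : log (∑ z, Q z) / (1 - α) ≤ renyiEntropy α Q := by
  unfold renyiEntropy
  split_ifs with hα
  · subst hα
    have hsum_le_card : ∑ z, Q z ≤ #{z | 0 < Q z} := calc
      ∑ z, Q z = ∑ z with 0 < Q z, Q z :=
        (sum_filter_of_ne fun z _ hz ↦ (hQ0 z).lt_of_ne' hz).symm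
      _ ≤ #{z | 0 < Q z} := by simpa using sum_le_card_nsmul _ _ 1 fun z _ ↦ hQ1 z
    rw [sub_zero, div_one]
    exact log_le_log hpos hsum_le_card
  · have hsum_le : ∑ z, Q z ≤ ∑ z, Q z ^ α :=
      sum_le_sum fun z _ ↦ self_le_rpow_of_le_one (hQ0 z) (hQ1 z) hα1.le
    rw [div_eq_inv_mul, ← one_div]
    have hscale : 0 ≤ 1 / (1 - α) := by rw [one_div_nonneg]; linarith
    gcongr

theorem bddBelow_renyiEntropy_of_le_of_mass_ge (hα1 : α < 1) {P : Z → ℝ}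
    (hP : P ≤ 1) {ε : ℝ} (hε : ε < 1) :
    BddBelow {x : ℝ | ∃ Q : Z → ℝ, (∀ z, 0 ≤ Q z ∧ Q z ≤ P z) ∧
        1 - ε ≤ ∑ z, Q z ∧ x = renyiEntropy α Q} := by
  refine ⟨log (1 - ε) / (1 - α), ?_⟩
  rintro _ ⟨Q, hQ, hmass, rfl⟩
  calc log (1 - ε) / (1 - α) ≤ log (∑ z, Q z) / (1 - α) := by gcongr
    _ ≤ renyiEntropy α Q := log_sum_div_le_renyiEntropy hα1 (fun z ↦ (hQ z).1)
        (fun z ↦ (hQ z).2.trans (hP z)) (by linarith)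

end renyiEntropy

/-- For `α ∈ [0,1)`, the smooth Rényi entropy defined with the statistical
distance ball is at least the one defined with the non-normalized ball. -/
theorem smooth_renyi_nonnormalized_le_statistical {Z : Type*} [Fintype Z]
    (P : Z → ℝ) (hP0 : ∀ z, 0 ≤ P z) (hP1 : ∑ z, P z = 1)
    (ε : ℝ) (hε0 : 0 ≤ ε) (hε1 : ε < 1)
    (α : ℝ) (hα0 : 0 ≤ α) (hα1 : α < 1) :
    sInf {x : ℝ | ∃ Q : Z → ℝ, (∀ z, 0 ≤ Q z ∧ Q z ≤ P z) ∧
        1 - ε ≤ ∑ z, Q z ∧ x = renyiEntropy α Q} ≤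
    sInf {x : ℝ | ∃ Q : Z → ℝ, (∀ z, 0 ≤ Q z) ∧ ∑ z, Q z = 1 ∧
        (1 / 2) * ∑ z, |P z - Q z| ≤ ε ∧ x = renyiEntropy α Q} := by
  refine le_csInf ⟨renyiEntropy α P, P, hP0, hP1, by simpa using hε0, rfl⟩ ?_
  rintro _ ⟨Q, hQ0, hQ1, hδ, rfl⟩
  have hP_le_one : P ≤ 1 := fun z ↦
    (single_le_sum (fun z _ ↦ hP0 z) (mem_univ z)).trans_eq hP1
  set M : Z → ℝ := fun z ↦ min (P z) (Q z)
  have hM0 : 0 ≤ M := fun z ↦ le_min (hP0 z) (hQ0 z)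
  have hM_mass : 1 - ε ≤ ∑ z, M z := by linarith [two_mul_sum_min_eq univ P Q]
  calc _ ≤ renyiEntropy α M :=
        csInf_le (bddBelow_renyiEntropy_of_le_of_mass_ge hα1 hP_le_one hε1)
          ⟨M, fun z ↦ ⟨hM0 z, min_le_left _ _⟩, hM_mass, rfl⟩
    _ ≤ renyiEntropy α Q :=
        renyiEntropy_mono hα0 hα1 hM0 (fun z ↦ min_le_right _ _) (by linarith)
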